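/- Let g ≥ 2, let Γ_L be a group generated by two elements whose abelianization is a free abelian group of rank 2, and let Γ' be a finitely generated group whose abelianization is a free abelian group of rank g − 2. Then there exists k ∈ {0, 1, 2, 3, 4} such that ks_{A4}(Γ_L * Γ') = (48 + 24k)·ks_{A4}(Γ') − (26 + 16k)·3^{g−2} − (8 + 6k)·4^{g−2}; in particular, 48 + 24k divides ks_{A4}(Γ_L * Γ') + (26 + 16k)·3^{g−2} + (8 + 6k)·4^{g−2}. -/

import Mathlib

/-- The conjugation equivalence on homomorphisms `Γ →* G`. -/
def homConj (Γ G : Type*) [Group Γ] [Group G] : Setoid (Γ →* G) where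
  r φ ψ := ∃ g : G, ∀ x, ψ x = g * φ x * g⁻¹
  iseqv := by
    refine ⟨fun φ => ⟨1, by simp⟩, ?_, ?_⟩
    · rintro φ ψ ⟨g, hg⟩
      exact ⟨g⁻¹, fun x => by rw [hg x]; group⟩
    · rintro φ ψ χ ⟨g, hg⟩ ⟨h, hh⟩
      exact ⟨h * g, fun x => by rw [hh x, hg x]; group⟩

/-- `ks G Γ`: number of conjugacy classes of homomorphisms `Γ →* G`. -/
noncomputable def ks (G Γ : Type*) [Group G] [Group Γ] : ℕ :=
  Nat.card (Quotient (homConj Γ G))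

/-- `ksw G Γ`: number of homomorphisms `Γ →* G`. -/
noncomputable def ksw (G Γ : Type*) [Group G] [Group Γ] : ℕ :=
  Nat.card (Γ →* G)

/-- `ksSub G H Γ`: the number of conjugacy classes of homomorphisms `Γ →* G` whose
image is contained in some subgroup of `G` isomorphic to `H`. -/
noncomputable def ksSub (G : Type*) [Group G] (H : Type*) [Group H] (Γ : Type*) [Group Γ] : ℕ :=
  Nat.card (Quotient (Setoid.comap
    (Subtype.val : {φ : Γ →* G // ∃ K : Subgroup G, Nonempty (K ≃* H) ∧ φ.range ≤ K} → (Γ →* G))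
    (homConj Γ G)))

/-- Number of conjugacy classes of homomorphisms `Γ →* G` satisfying a property `P`. -/
noncomputable def ksRestrict (G Γ : Type*) [Group G] [Group Γ] (P : (Γ →* G) → Prop) : ℕ :=
  Nat.card (Quotient (Setoid.comap
    (Subtype.val : {φ : Γ →* G // P φ} → (Γ →* G)) (homConj Γ G)))

/-- A maximal abelian subgroup. -/
def IsMaximalAbelian {G : Type*} [Group G] (K : Subgroup G) : Prop :=
  IsMulCommutative K ∧ ∀ K' : Subgroup G, IsMulCommutative K' → K ≤ K' → K' = K

abbrev A4 : Type := alternatingGroup (Fin 4)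
abbrev A5 : Type := alternatingGroup (Fin 5)
abbrev V4 : Type := Multiplicative (ZMod 2 × ZMod 2)
abbrev Z3 : Type := Multiplicative (ZMod 3)
abbrev Z5 : Type := Multiplicative (ZMod 5)
/-- The free abelian group of rank `g`, written multiplicatively. -/
abbrev Zg (g : ℕ) : Type := Multiplicative (Fin g → ℤ)


/-!
Burnside's lemma for the conjugation action of `A4` on `Hom(Γ, A4)` gives
`12 · ks_{A4}(Γ) = Σ_g |Hom(Γ, C(g))|`. A nontrivial centralizer in `A4` is abelian: it is `V4`
for the three involutions and `ℤ/3` for the eight 3-cycles. If `|Hom(Γ, K)| = |K|ⁿ` for abelian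
`K` (for `Γ'` with `n = g - 2`, and for `Γ_L * Γ'` with `n = g`), this reads
`12 · ks_{A4}(Γ) = |Hom(Γ, A4)| + 3·4ⁿ + 8·3ⁿ`. As `Hom(Γ_L * Γ', A4) = Hom(Γ_L, A4) × Hom(Γ', A4)`,
the two identities combine to the formula once `|Hom(Γ_L, A4)| = 48 + 24k`: homomorphisms with
abelian image factor through `ℤ²`, so there are as many as commuting pairs in `A4`, namely 48;
`S4` acts freely by conjugation on the others, since only the identity of `S4` centralizes two
non-commuting elements of `A4`; and `|Hom(Γ_L, A4)| ≤ |A4|² = 144` as `Γ_L` is 2-generated.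
-/

open Finset MulAction

section HomActions

variable {Γ G : Type*} [Group Γ] [Group G]

namespace MonoidHom

instance : MulAction (MulAut G) (Γ →* G) where
  smul e φ := (e : G →* G).comp φ
  one_smul _ := rfl
  mul_smul _ _ _ := rfl

instance conjAction : MulAction G (Γ →* G) := .compHom _ MulAut.conj

instance conjNormalAction {N : Subgroup G} [N.Normal] : MulAction G (Γ →* N) :=
  .compHom _ (MulAut.conjNormal (H := N))

lemma conj_smul_apply (g : G) (φ : Γ →* G) (x : Γ) : (g • φ) x = g * φ x * g⁻¹ := rfl

lemma conjNormal_smul_apply {N : Subgroup G} [N.Normal] (g : G) (φ : Γ →* N) (x : Γ) :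
    ((g • φ) x : G) = g * φ x * g⁻¹ := rfl

lemma conj_smul_eq_self_iff {g : G} {φ : Γ →* G} : g • φ = φ ↔ ∀ x, Commute g (φ x) := by
  simp only [MonoidHom.ext_iff, conj_smul_apply, mul_inv_eq_iff_eq_mul]; rfl

lemma conjNormal_smul_eq_self_iff {N : Subgroup G} [N.Normal] {g : G} {φ : Γ →* N} :
    g • φ = φ ↔ ∀ x, Commute g (φ x : G) := by
  simp only [MonoidHom.ext_iff, Subtype.ext_iff, conjNormal_smul_apply, mul_inv_eq_iff_eq_mul]
  rfl

end MonoidHom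

open MonoidHom

lemma homConj_eq_orbitRel : homConj Γ G = orbitRel G (Γ →* G) := by
  ext φ ψ
  rw [orbitRel_apply, mem_orbit_iff]
  constructor
  · rintro ⟨g, hg⟩
    exact ⟨g⁻¹, MonoidHom.ext fun x => by rw [conj_smul_apply, hg x]; group⟩
  · rintro ⟨g, rfl⟩
    exact ⟨g⁻¹, fun x => by rw [conj_smul_apply]; group⟩

def fixedByEquivHomCentralizer (g : G) :
    fixedBy (Γ →* G) g ≃ (Γ →* Subgroup.centralizer {g}) where
  toFun φ := (φ : Γ →* G).codRestrict _ fun x =>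
    Subgroup.mem_centralizer_singleton_iff.2 (conj_smul_eq_self_iff.1 φ.2 x).symm
  invFun ψ := ⟨(Subgroup.centralizer {g}).subtype.comp ψ, conj_smul_eq_self_iff.2 fun x =>
    (Subgroup.mem_centralizer_singleton_iff.1 (ψ x).2).symm⟩
  left_inv _ := rfl
  right_inv _ := rfl

theorem ks_mul_card [Fintype G] [Finite (Γ →* G)] :
    ks G Γ * Fintype.card G = ∑ g : G, Nat.card (Γ →* Subgroup.centralizer {g}) := by
  classical
  have := Fintype.ofFinite (Γ →* G)
  have := Fintype.ofFinite (orbitRel.Quotient G (Γ →* G))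
  rw [ks, homConj_eq_orbitRel, Nat.card_eq_fintype_card,
    ← sum_card_fixedBy_eq_card_orbits_mul_card_group]
  exact Finset.sum_congr rfl fun g _ => by
    rw [← Nat.card_eq_fintype_card, Nat.card_congr (fixedByEquivHomCentralizer g)]

end HomActions

section Counting

def commutingHomEquivAbelianization (Γ G : Type*) [Group Γ] [Group G] :
    {φ : Γ →* G // ∀ x y, Commute (φ x) (φ y)} ≃ (Abelianization Γ →* G) where
  toFun φ := QuotientGroup.lift _ φ.1 <| by
    rw [commutator_eq_closure, Subgroup.closure_le]
    rintro _ ⟨p, q, rfl⟩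
    simpa [commutatorElement_eq_one_iff_commute] using φ.2 p q
  invFun F := ⟨F.comp Abelianization.of, fun x y => (Commute.all _ _).map F⟩
  left_inv _ := rfl
  right_inv F := MonoidHom.ext fun x => QuotientGroup.induction_on x fun _ => rfl

def zgHomEquivPairwiseCommute (n : ℕ) (G : Type*) [Group G] :
    (Zg n →* G) ≃ {v : Fin n → G // Pairwise fun i j => Commute (v i) (v j)} :=
  (MulEquiv.monoidHomCongrLeftEquiv (MulEquiv.funMultiplicative (Fin n) ℤ)).trans <|
    MonoidHom.noncommPiCoprodEquiv.symm.trans <|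
      Equiv.subtypeEquiv (Equiv.piCongrRight fun _ => (zpowersHom G).symm) fun ϕ => by
        refine ⟨fun h i j hij => by simpa using h hij (.ofAdd 1) (.ofAdd 1),
          fun h i j hij x y => ?_⟩
        rw [(ϕ i).apply_mint, (ϕ j).apply_mint]
        exact (h hij).zpow_zpow _ _

variable {Γ Δ G : Type*} [Group Γ] [Group Δ] [Group G]

open scoped IsMulCommutative in
lemma card_hom_eq_card_pow_of_abelianization {n : ℕ} (hΓ : Nonempty (Abelianization Γ ≃* Zg n))
    (H : Type*) [Group H] [IsMulCommutative H] : Nat.card (Γ →* H) = Nat.card H ^ n := by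
  obtain ⟨e⟩ := hΓ
  have hcomm (v : Fin n → H) : Pairwise fun i j => Commute (v i) (v j) :=
    fun _ _ _ => Commute.all _ _
  rw [Nat.card_congr (Abelianization.lift.trans (MulEquiv.monoidHomCongrLeftEquiv e)),
    Nat.card_congr ((zgHomEquivPairwiseCommute n H).trans (Equiv.subtypeUnivEquiv hcomm)),
    Nat.card_fun, Nat.card_fin]

lemma card_coprod_hom : Nat.card (Monoid.Coprod Γ Δ →* G) =
    Nat.card (Γ →* G) * Nat.card (Δ →* G) := by
  rw [← Nat.card_congr Monoid.Coprod.liftEquiv, Nat.card_prod]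

instance [Finite (Γ →* G)] [Finite (Δ →* G)] : Finite (Monoid.Coprod Γ Δ →* G) :=
  .of_equiv _ Monoid.Coprod.liftEquiv

lemma injective_hom_eval_pair {a b : Γ} (hab : Subgroup.closure {a, b} = ⊤) :
    Function.Injective fun φ : Γ →* G => (φ a, φ b) := fun φ ψ h =>
  MonoidHom.eq_of_eqOn_dense hab <| by
    rintro x (rfl | rfl)
    exacts [congrArg Prod.fst h, congrArg Prod.snd h]

instance finite_hom_of_fg [Group.FG Γ] [Finite G] : Finite (Γ →* G) := by
  obtain ⟨S, hS⟩ := Group.FG.out (G := Γ)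
  exact .of_injective (fun φ : Γ →* G => fun s : S => φ s) fun φ ψ h =>
    MonoidHom.eq_of_eqOn_dense hS fun x hx => congrFun h ⟨x, hx⟩

end Counting

section FreeAction

variable {G : Type*} [Group G]

lemma card_dvd_card_of_stabilizer_eq_bot {X : Type*} [MulAction G X] [Finite X]
    (h : ∀ x : X, stabilizer G x = ⊥) : Nat.card G ∣ Nat.card X := by
  rw [Nat.card_congr (selfEquivOrbitsQuotientProd h), Nat.card_prod]
  exact dvd_mul_left _ _

def nonCommutingHoms (Γ : Type*) [Group Γ] (N : Subgroup G) [N.Normal] :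
    SubMulAction G (Γ →* N) where
  carrier := {φ | ¬∀ x y, Commute (φ x) (φ y)}
  smul_mem' g _ hφ hcomm := hφ fun x y =>
    (commute_map_iff (MulAut.conjNormal g).injective).1 (hcomm x y)

end FreeAction

namespace A4

lemma isMulCommutative_centralizer {g : A4} (hg : g ≠ 1) :
    IsMulCommutative (Subgroup.centralizer {g}) := by
  have key : ∀ g a b : A4, g ≠ 1 → g * a = a * g → g * b = b * g → a * b = b * a := by decide
  exact ⟨⟨fun a b => Subtype.ext <| key g a b hg
    (Subgroup.mem_centralizer_singleton_iff.1 a.2).symm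
    (Subgroup.mem_centralizer_singleton_iff.1 b.2).symm⟩⟩

lemma sum_card_centralizer_pow (n : ℕ) :
    ∑ g ∈ univ.erase (1 : A4), Nat.card (Subgroup.centralizer {g}) ^ n = 3 * 4 ^ n + 8 * 3 ^ n := by
  have hcard (g : A4) : Nat.card (Subgroup.centralizer {g}) = #{x | x * g = g * x} := by
    rw [Nat.card_congr (Equiv.subtypeEquivRight fun _ => Subgroup.mem_centralizer_singleton_iff),
      Nat.card_eq_fintype_card, Fintype.card_subtype]
  have himage : (univ.erase (1 : A4)).image (fun g => #{x | x * g = g * x}) = {4, 3} := by decide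
  have h4 : #{g ∈ univ.erase (1 : A4) | #{x | x * g = g * x} = 4} = 3 := by decide
  have h3 : #{g ∈ univ.erase (1 : A4) | #{x | x * g = g * x} = 3} = 8 := by decide
  simp_rw [hcard]
  rw [Finset.sum_comp (· ^ n), himage, sum_pair (by norm_num), h4, h3, smul_eq_mul, smul_eq_mul]

lemma card_commuting_pairs :
    Nat.card {v : Fin 2 → A4 // Pairwise fun i j => Commute (v i) (v j)} = 48 := by
  have hpair (v : Fin 2 → A4) :
      (Pairwise fun i j => Commute (v i) (v j)) ↔ ∀ i j, v i * v j = v j * v i :=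
    ⟨fun h i j => (eq_or_ne i j).elim (fun hij => hij ▸ rfl) (h ·), fun h i j _ => h i j⟩
  rw [Nat.card_congr (Equiv.subtypeEquivRight hpair), Nat.card_eq_fintype_card,
    Fintype.card_subtype]
  decide

lemma eq_one_of_commute_of_not_commute {a b : A4} (hab : ¬Commute a b) {σ : Equiv.Perm (Fin 4)}
    (ha : Commute σ a) (hb : Commute σ b) : σ = 1 := by
  have key : ∀ (a b : A4) (σ : Equiv.Perm (Fin 4)),
      ¬a * b = b * a → σ * a = a * σ → σ * b = b * σ → σ = 1 := by decide
  exact key a b σ hab ha hb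

end A4

theorem ks_A4_mul_twelve (Γ : Type*) [Group Γ] [Finite (Γ →* A4)] (n : ℕ)
    (h : ∀ K : Subgroup A4, IsMulCommutative K → Nat.card (Γ →* K) = Nat.card K ^ n) :
    ks A4 Γ * 12 = Nat.card (Γ →* A4) + (3 * 4 ^ n + 8 * 3 ^ n) := by
  have hcentralizer_one : Subgroup.centralizer {(1 : A4)} = ⊤ :=
    Subgroup.centralizer_eq_top_iff_subset.2 <| Set.singleton_subset_iff.2 (Subgroup.one_mem _)
  rw [show 12 = Fintype.card A4 from rfl, ks_mul_card, ← add_sum_erase _ _ (mem_univ 1),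
    ← A4.sum_card_centralizer_pow n, hcentralizer_one,
    Nat.card_congr (MulEquiv.monoidHomCongrRightEquiv Subgroup.topEquiv)]
  exact congrArg _ <| sum_congr rfl fun g hg =>
    h _ (A4.isMulCommutative_centralizer (ne_of_mem_erase hg))

lemma stabilizer_nonCommutingHoms_eq_bot {Γ : Type*} [Group Γ]
    (φ : nonCommutingHoms Γ (alternatingGroup (Fin 4))) :
    stabilizer (Equiv.Perm (Fin 4)) φ = ⊥ := by
  have hφ : ¬∀ x y, Commute ((φ : Γ →* A4) x) (φ.1 y) := φ.2
  push Not at hφ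
  obtain ⟨x, y, hxy⟩ := hφ
  refine (Subgroup.eq_bot_iff_forall _).2 fun σ hσ => ?_
  have hfix := MonoidHom.conjNormal_smul_eq_self_iff.1 (congrArg Subtype.val hσ)
  exact A4.eq_one_of_commute_of_not_commute hxy (hfix x) (hfix y)

theorem card_hom_A4_of_two_generated {Γ : Type*} [Group Γ] {a b : Γ}
    (hab : Subgroup.closure {a, b} = ⊤) (hΓ : Nonempty (Abelianization Γ ≃* Zg 2)) :
    ∃ k ≤ 4, Nat.card (Γ →* A4) = 48 + 24 * k := by
  classical
  obtain ⟨e⟩ := hΓ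
  have hinj := injective_hom_eval_pair (G := A4) hab
  have : Finite (Γ →* A4) := .of_injective _ hinj
  have hsplit : Nat.card (Γ →* A4) = Nat.card {φ : Γ →* A4 // ∀ x y, Commute (φ x) (φ y)} +
      Nat.card (nonCommutingHoms Γ (alternatingGroup (Fin 4))) := by
    rw [← Nat.card_sum]
    exact Nat.card_congr (Equiv.sumCompl fun φ : Γ →* A4 => ∀ x y, Commute (φ x) (φ y)).symm
  have hcomm : Nat.card {φ : Γ →* A4 // ∀ x y, Commute (φ x) (φ y)} = 48 := by
    rw [Nat.card_congr ((commutingHomEquivAbelianization Γ A4).trans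
        (MulEquiv.monoidHomCongrLeftEquiv e)), Nat.card_congr (zgHomEquivPairwiseCommute 2 A4),
      A4.card_commuting_pairs]
  have hdvd : 24 ∣ Nat.card (nonCommutingHoms Γ (alternatingGroup (Fin 4))) :=
    (by rw [Nat.card_perm, Nat.card_fin]; rfl : Nat.card (Equiv.Perm (Fin 4)) = 24) ▸
      card_dvd_card_of_stabilizer_eq_bot stabilizer_nonCommutingHoms_eq_bot
  have hle : Nat.card (Γ →* A4) ≤ 144 := Nat.card_le_card_of_injective _ hinj |>.trans_eq <| by
    rw [Nat.card_prod, Nat.card_eq_fintype_card]; rfl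
  obtain ⟨k, hk⟩ := hdvd
  exact ⟨k, by omega, by omega⟩

theorem statement_19_general (g : ℕ)
    (ΓL : Type*) [Group ΓL]
    (hgenL : ∃ a b : ΓL, Subgroup.closure {a, b} = (⊤ : Subgroup ΓL))
    (habL : Nonempty (Abelianization ΓL ≃* Zg 2))
    (Γ' : Type*) [Group Γ'] (hΓ' : Group.FG Γ')
    (hab' : Nonempty (Abelianization Γ' ≃* Zg (g - 2))) :
    ∃ k : ℕ, k ≤ 4 ∧
      (ks A4 (Monoid.Coprod ΓL Γ') : ℤ) =
        (48 + 24 * k) * (ks A4 Γ' : ℤ)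
          - (26 + 16 * k) * 3 ^ (g - 2) - (8 + 6 * k) * 4 ^ (g - 2) ∧
      ((48 + 24 * (k : ℤ))) ∣ (ks A4 (Monoid.Coprod ΓL Γ') : ℤ)
          + (26 + 16 * k) * 3 ^ (g - 2) + (8 + 6 * k) * 4 ^ (g - 2) := by
  obtain ⟨a, b, hab⟩ := hgenL
  obtain ⟨k, hk, hL⟩ := card_hom_A4_of_two_generated hab habL
  have : Group.FG ΓL := Group.fg_iff.2 ⟨{a, b}, hab, Set.toFinite _⟩
  have hks' := ks_A4_mul_twelve Γ' (g - 2) fun K _ => card_hom_eq_card_pow_of_abelianization hab' K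
  have hks := ks_A4_mul_twelve (Monoid.Coprod ΓL Γ') (2 + (g - 2)) fun K _ => by
    rw [card_coprod_hom, card_hom_eq_card_pow_of_abelianization habL K,
      card_hom_eq_card_pow_of_abelianization hab' K, pow_add]
  rw [card_coprod_hom, hL] at hks
  have hmain : (ks A4 (Monoid.Coprod ΓL Γ') : ℤ) = (48 + 24 * k) * (ks A4 Γ' : ℤ)
      - (26 + 16 * k) * 3 ^ (g - 2) - (8 + 6 * k) * 4 ^ (g - 2) := by
    refine mul_left_cancel₀ (a := (12 : ℤ)) (by norm_num) ?_
    zify at hks hks'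
    linear_combination hks - (48 + 24 * (k : ℤ)) * hks'
  exact ⟨k, hk, hmain, ks A4 Γ', by linear_combination hmain⟩

theorem statement_19 (g : ℕ) (hg : 2 ≤ g)
    (ΓL : Type*) [Group ΓL]
    (hgenL : ∃ a b : ΓL, Subgroup.closure {a, b} = (⊤ : Subgroup ΓL))
    (habL : Nonempty (Abelianization ΓL ≃* Zg 2))
    (Γ' : Type*) [Group Γ'] (hΓ' : Group.FG Γ')
    (hab' : Nonempty (Abelianization Γ' ≃* Zg (g - 2))) :
    ∃ k : ℕ, k ≤ 4 ∧
      (ks A4 (Monoid.Coprod ΓL Γ') : ℤ) =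
        (48 + 24 * k) * (ks A4 Γ' : ℤ)
          - (26 + 16 * k) * 3 ^ (g - 2) - (8 + 6 * k) * 4 ^ (g - 2) ∧
      ((48 + 24 * (k : ℤ))) ∣ (ks A4 (Monoid.Coprod ΓL Γ') : ℤ)
          + (26 + 16 * k) * 3 ^ (g - 2) + (8 + 6 * k) * 4 ^ (g - 2) :=
  statement_19_general g ΓL hgenL habL Γ' hΓ' hab'
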